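/- Pure shift case of the Baik–Deift–Rains identity: for χ_{−w}(t) = t^{−w} one has det(I + sP − s L(χ_{−w}) Q_n L(χ_w)) = (1+s)^{n−w} det(I − s² Q_n L(χ_w) Q L(χ_{−w}) Q_n) for all n, w ∈ ℤ and s ≠ −1. -/

import Mathlib

open Filter

noncomputable section

/-- Fourier coefficients of the pointwise product of two scalar functions on the circle. -/
def convS (a b : ℤ → ℂ) : ℤ → ℂ := fun n => ∑' m : ℤ, a m * b (n - m)

/-- Fourier coefficients of the constant function `1`. -/
def oneS : ℤ → ℂ := fun n => if n = 0 then 1 else 0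

/-- Kernel of an operator on `ℓ²(ℤ, ℂ)`. -/
abbrev KS := ℤ → ℤ → ℂ

/-- Composition of operators on `ℓ²(ℤ, ℂ)`, on the level of kernels. -/
def compS (A B : KS) : KS := fun j l => ∑' m : ℤ, A j m * B m l

/-- The identity operator on `ℓ²(ℤ, ℂ)`. -/
def idS : KS := fun j l => if j = l then 1 else 0

/-- The Laurent operator `L(a) = (a_{j-k})_{j,k ∈ ℤ}`. -/
def LS (a : ℤ → ℂ) : KS := fun j l => a (j - l)

/-- The projection `P` onto coordinates `k ≥ 0`. -/
def PS : KS := fun j l => if j = l ∧ 0 ≤ j then 1 else 0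

/-- The projection `Q = I - P` onto coordinates `k < 0`. -/
def QS : KS := fun j l => if j = l ∧ j < 0 then 1 else 0

/-- The projection `Q_n` onto coordinates `k ≥ n`. -/
def QnS (n : ℤ) : KS := fun j l => if j = l ∧ n ≤ j then 1 else 0

/-- Fourier coefficients of `χ_w(t) = t^w`. -/
def chiS (w : ℤ) : ℤ → ℂ := fun n => if n = w then 1 else 0

/-- Finite section of a kernel over the coordinates `[-m, m]`. -/
def secS (A : KS) (m : ℕ) : Matrix (Fin (2 * m + 1)) (Fin (2 * m + 1)) ℂ :=
  Matrix.of fun p q => A ((p : ℤ) - (m : ℤ)) ((q : ℤ) - (m : ℤ))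

/-- The (Fredholm) determinant of an operator on `ℓ²(ℤ, ℂ)`, as the limit of
determinants of finite sections. -/
def detS (A : KS) : ℂ := limUnder atTop fun m : ℕ => (secS A m).det

/-- The continuous function on the circle with Fourier coefficients `a`
(absolutely convergent series for `a ∈ K₁¹`). -/
def Fhat (a : ℤ → ℂ) (θ : ℝ) : ℂ := ∑' n : ℤ, a n * Complex.exp ((n : ℂ) * θ * Complex.I)

/-!
Conjugation by the shift `L(χ_w)` translates coordinates, so `L(χ_{-w}) Q_n L(χ_w) = Q_{n-w}` and
`Q_n L(χ_w) Q L(χ_{-w}) Q_n` is the projection onto `n ≤ k < w`. Both operators are therefore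
diagonal and differ from `I` in finitely many coordinates, so their determinants are finite
products: the left side is `(1+s)^{n-w}` if `w ≤ n` and `(1-s)^{w-n}` if `n < w`, the determinant
on the right is `(1-s²)^{max(w-n, 0)}`, and `1 - s² = (1+s)(1-s)`.
-/

def diagS (f : ℤ → ℂ) : KS := fun j l => if j = l then f j else 0

lemma compS_diagS_left (f : ℤ → ℂ) (A : KS) : compS (diagS f) A = fun j l => f j * A j l := by
  funext j l
  rw [compS, tsum_eq_single j fun m hm => by simp [diagS, Ne.symm hm]]
  simp [diagS]

lemma compS_LS_chiS_left (w : ℤ) (A : KS) : compS (LS (chiS w)) A = fun j l => A (j - w) l := by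
  funext j l
  rw [compS, tsum_eq_single (j - w) fun m hm => by simp [LS, chiS, show j - m ≠ w by omega]]
  simp [LS, chiS]

lemma compS_LS_chiS_right (A : KS) (w : ℤ) : compS A (LS (chiS w)) = fun j l => A j (l + w) := by
  funext j l
  rw [compS, tsum_eq_single (l + w) fun m hm => by simp [LS, chiS, show m - l ≠ w by omega]]
  simp [LS, chiS]

lemma idS_eq_diagS : idS = diagS 1 := by
  funext j l; simp [idS, diagS]

lemma QS_eq_diagS : QS = diagS ((Set.Iio 0).indicator 1) := by
  funext j l; by_cases h : j = l <;> simp [QS, diagS, Set.indicator_apply, h]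

lemma QnS_eq_diagS (n : ℤ) : QnS n = diagS ((Set.Ici n).indicator 1) := by
  funext j l; by_cases h : j = l <;> simp [QnS, diagS, Set.indicator_apply, h]

lemma diagS_add (f g : ℤ → ℂ) : diagS f + diagS g = diagS (f + g) := by
  funext j l; by_cases h : j = l <;> simp [diagS, h]

lemma smul_diagS (c : ℂ) (f : ℤ → ℂ) : c • diagS f = diagS (c • f) := by
  funext j l; by_cases h : j = l <;> simp [diagS, h]

lemma compS_LS_chiS_neg_diagS_LS_chiS (w : ℤ) (f : ℤ → ℂ) :
    compS (LS (chiS (-w))) (compS (diagS f) (LS (chiS w))) = diagS fun j => f (j + w) := by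
  rw [compS_LS_chiS_right, compS_LS_chiS_left]
  funext j l
  simp [diagS]

lemma compS_LS_chiS_neg_QnS_LS_chiS (n w : ℤ) :
    compS (LS (chiS (-w))) (compS (QnS n) (LS (chiS w))) = QnS (n - w) := by
  rw [QnS_eq_diagS, QnS_eq_diagS, compS_LS_chiS_neg_diagS_LS_chiS]
  congr 1
  funext j
  simp [Set.indicator_apply]

lemma compS_QnS_LS_chiS_QS_LS_chiS_neg_QnS (n w : ℤ) :
    compS (QnS n) (compS (LS (chiS w)) (compS QS (compS (LS (chiS (-w))) (QnS n))))
      = diagS ((Set.Ico n w).indicator 1) := by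
  simp only [QnS_eq_diagS, QS_eq_diagS, compS_diagS_left, compS_LS_chiS_left]
  funext j l
  by_cases h : j = l
  · subst h; by_cases h1 : n ≤ j <;> by_cases h2 : j < w <;> simp [diagS, h1, h2]
  · simp [diagS, h]

lemma idS_add_smul_PS_sub_smul_QnS_of_nonneg (s : ℂ) {m : ℤ} (hm : 0 ≤ m) :
    idS + s • PS - s • QnS m = idS + s • diagS ((Set.Ico 0 m).indicator 1) := by
  funext j l
  by_cases h : j = l
  · subst h
    simp only [idS, PS, QnS, diagS, Set.indicator_apply, Set.mem_Ico, Pi.add_apply, Pi.sub_apply,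
      Pi.smul_apply, Pi.one_apply, smul_eq_mul, true_and, if_true]
    split_ifs <;> first | (exfalso; omega) | ring
  · simp [idS, PS, QnS, diagS, h]

lemma idS_add_smul_PS_sub_smul_QnS_of_neg (s : ℂ) {m : ℤ} (hm : m < 0) :
    idS + s • PS - s • QnS m = idS + (-s) • diagS ((Set.Ico m 0).indicator 1) := by
  funext j l
  by_cases h : j = l
  · subst h
    simp only [idS, PS, QnS, diagS, Set.indicator_apply, Set.mem_Ico, Pi.add_apply, Pi.sub_apply,
      Pi.smul_apply, Pi.one_apply, smul_eq_mul, true_and, if_true]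
    split_ifs <;> first | (exfalso; omega) | ring
  · simp [idS, PS, QnS, diagS, h]

lemma secS_diagS (f : ℤ → ℂ) (m : ℕ) :
    secS (diagS f) m = Matrix.diagonal fun p : Fin (2 * m + 1) => f (p - m) := by
  ext p q
  by_cases h : p = q
  · simp [secS, diagS, h]
  · simp [secS, diagS, h, Fin.val_ne_of_ne h]

lemma detS_diagS (f : ℤ → ℂ) (S : Finset ℤ) (hf : ∀ j ∉ S, f j = 1) :
    detS (diagS f) = ∏ j ∈ S, f j := by
  obtain ⟨N, hN⟩ : ∃ N : ℕ, ∀ j ∈ S, j.natAbs ≤ N :=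
    ⟨S.sup Int.natAbs, fun j hj => Finset.le_sup (f := Int.natAbs) hj⟩
  refine Tendsto.limUnder_eq (tendsto_const_nhds.congr' ?_)
  filter_upwards [eventually_ge_atTop N] with m hm
  let e : Fin (2 * m + 1) → ℤ := fun p => p - m
  have he : Function.Injective e := fun p q hpq => Fin.ext (by simp [e] at hpq; omega)
  have hS : S ⊆ Finset.univ.image e := fun j hj => Finset.mem_image.2
    ⟨⟨(j + m).toNat, by have := hN j hj; omega⟩, Finset.mem_univ _, by
      have := hN j hj; simp [e]; omega⟩
  rw [secS_diagS, Matrix.det_diagonal, Finset.prod_subset hS fun j _ hj => hf j hj,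
    Finset.prod_image fun p _ q _ hpq => he hpq]

lemma detS_idS_add_smul_diagS_indicator_Ico (c : ℂ) (a b : ℤ) :
    detS (idS + c • diagS ((Set.Ico a b).indicator 1)) = (1 + c) ^ (b - a).toNat := by
  rw [idS_eq_diagS, smul_diagS, diagS_add,
    detS_diagS _ (Finset.Ico a b) fun j hj => by simp_all,
    Finset.prod_congr rfl fun j hj => show _ = 1 + c by simp_all,
    Finset.prod_const, Int.card_Ico]

/-- Pure shift case: for all `n, w ∈ ℤ` and `s ≠ -1`,
`det(I + sP - sL(χ_{-w})Q_nL(χ_w)) = (1+s)^{n-w} det(I - s²Q_nL(χ_w)QL(χ_{-w})Q_n)`. -/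
theorem bdr_pure_shift (n w : ℤ) (s : ℂ) (hs : s ≠ -1) :
    detS (idS + s • PS - s • compS (LS (chiS (-w))) (compS (QnS n) (LS (chiS w))))
      = (1 + s) ^ (n - w)
          * detS (idS - s ^ 2 • compS (QnS n)
              (compS (LS (chiS w)) (compS QS (compS (LS (chiS (-w))) (QnS n))))) := by
  rw [compS_LS_chiS_neg_QnS_LS_chiS, compS_QnS_LS_chiS_QS_LS_chiS_neg_QnS,
    sub_eq_add_neg idS, ← neg_smul, detS_idS_add_smul_diagS_indicator_Ico]
  rcases le_or_gt w n with hwn | hnw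
  · rw [idS_add_smul_PS_sub_smul_QnS_of_nonneg s (sub_nonneg.2 hwn),
      detS_idS_add_smul_diagS_indicator_Ico, Int.toNat_of_nonpos (show w - n ≤ 0 by omega),
      pow_zero, mul_one, sub_zero, ← zpow_natCast, Int.toNat_of_nonneg (sub_nonneg.2 hwn)]
  · obtain ⟨k, hk⟩ : ∃ k : ℕ, w - n = k := ⟨(w - n).toNat, by omega⟩
    have hs1 : 1 + s ≠ 0 := fun h => hs (by linear_combination h)
    rw [idS_add_smul_PS_sub_smul_QnS_of_neg s (sub_neg.2 hnw),
      detS_idS_add_smul_diagS_indicator_Ico, show 0 - (n - w) = w - n by ring, hk,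
      show n - w = -k by omega, Int.toNat_natCast, zpow_neg, zpow_natCast,
      show 1 + -s ^ 2 = (1 + s) * (1 + -s) by ring, mul_pow]
    field_simp
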